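/- Let ℓ, q ∈ ℂ and let I ⊆ F be the two-sided ideal generated by the five elements x₂x₁ + x₁x₂, x₃x₁ + x₁x₃, x₃x₂ + x₂x₃ − ℓ x₁x₃ + q x₁x₂, x₁², and x₂² − ℓ x₁x₂. Then the images in F/I of the monomials x₁^{e₁} x₂^{e₂} x₃^{a₃}, over all e₁, e₂ ∈ {0, 1} and a₃ ∈ ℕ, form a ℂ-basis of F/I. (For a ≠ bℓ, this quotient is the Nichols algebra associated to the braiding of type R_{1,5} with t = −1 and p ≠ 0; it has Gelfand–Kirillov dimension 1.) -/

import Mathlib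

/-!
Read the relations as the rewriting rules `x₂x₁ ↦ -x₁x₂`, `x₃x₁ ↦ -x₁x₃`,
`x₃x₂ ↦ -x₂x₃ + ℓ x₁x₃ - q x₁x₂`, `x₁² ↦ 0`, `x₂² ↦ ℓ x₁x₂`. They rewrite `xᵢ` times a monomial
`x₁^e₁ x₂^e₂ x₃^a` into a combination of such monomials, so the span of these monomials in `F/I`
is stable under left multiplication, contains `1`, and is everything. Conversely, the same
formulas define operators on the vector space with basis the symbols `(e₁, e₂, a)`; they satisfy
the relations, so `F/I` acts there, and the monomial indexed by `e` maps the basis vector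
`(0, 0, 0)` to the basis vector `e`. This gives linear independence.
-/

/-- The free associative unital `ℂ`-algebra on three generators. -/
abbrev F : Type := FreeAlgebra ℂ (Fin 3)

/-- The generators `x₁ = X 0`, `x₂ = X 1`, `x₃ = X 2`. -/
noncomputable def X (i : Fin 3) : F := FreeAlgebra.ι ℂ i

/-- Generators: `x₂x₁ + x₁x₂`, `x₃x₁ + x₁x₃`, `x₃x₂ + x₂x₃ − ℓ x₁x₃ + q x₁x₂`, `x₁²`, `x₂² − ℓ x₁x₂`. -/
noncomputable def S (l q : ℂ) : Set F :=
  {X 1 * X 0 + X 0 * X 1,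
   X 2 * X 0 + X 0 * X 2,
   X 2 * X 1 + X 1 * X 2 - l • (X 0 * X 2) + q • (X 0 * X 1),
   X 0 * X 0,
   X 1 * X 1 - l • (X 0 * X 1)}

/-- The relation whose two-sided-ideal closure is the ideal generated by `S`;
`RingQuot rel` is the quotient `F/I`. -/
def rel (l q : ℂ) : F → F → Prop := fun x y => x ∈ S l q ∧ y = 0


theorem Submodule.span_range_eq_top_of_generator_mul_mem {R A ι κ : Type*} [CommSemiring R]
    [Semiring A] [Algebra R A] (f : FreeAlgebra R ι →ₐ[R] A) (hf : Function.Surjective f)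
    (b : κ → A) (h1 : 1 ∈ span R (Set.range b))
    (hmul : ∀ i k, f (FreeAlgebra.ι R i) * b k ∈ span R (Set.range b)) :
    span R (Set.range b) = ⊤ := by
  set T := span R (Set.range b)
  have hgen (i : ι) : ∀ v ∈ T, f (FreeAlgebra.ι R i) * v ∈ T := fun v hv => by
    induction hv using Submodule.span_induction with
    | mem x hx => obtain ⟨k, rfl⟩ := hx; exact hmul i k
    | zero => simp
    | add x y _ _ hx hy => rw [mul_add]; exact add_mem hx hy
    | smul c x _ hx => rw [mul_smul_comm]; exact T.smul_mem c hx
  have hall (w : FreeAlgebra R ι) : ∀ v ∈ T, f w * v ∈ T := by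
    induction w using FreeAlgebra.induction with
    | grade0 c => intro v hv; rw [AlgHom.commutes, ← Algebra.smul_def]; exact T.smul_mem c hv
    | grade1 i => exact hgen i
    | mul w w' hw hw' => intro v hv; rw [map_mul, mul_assoc]; exact hw _ (hw' v hv)
    | add w w' hw hw' => intro v hv; rw [map_add, add_mul]; exact add_mem (hw v hv) (hw' v hv)
  refine eq_top_iff.2 fun x _ => ?_
  obtain ⟨w, rfl⟩ := hf x
  simpa using hall w 1 h1

namespace R15

abbrev Exponent : Type := Fin 2 × Fin 2 × ℕ

def monomial {A : Type*} [Monoid A] (y : Fin 3 → A) (e : Exponent) : A :=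
  y 0 ^ (e.1 : ℕ) * y 1 ^ (e.2.1 : ℕ) * y 2 ^ e.2.2

theorem map_monomial {A B G : Type*} [Monoid A] [Monoid B] [FunLike G A B] [MonoidHomClass G A B]
    (f : G) (y : Fin 3 → A) (e : Exponent) : f (monomial y e) = monomial (f ∘ y) e := by
  simp [monomial]

open Finsupp in
/-- The normal form of `xᵢ₊₁ · x₁^e₁ x₂^e₂ x₃^a`, `e = (e₁, e₂, a)`, under the rewriting rules. -/
noncomputable def leftMul (l q : ℂ) : Fin 3 → Exponent → Exponent →₀ ℂ
  | 0, (0, e₂, a) => single (1, e₂, a) 1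
  | 0, (1, _, _) => 0
  | 1, (0, 0, a) => single (0, 1, a) 1
  | 1, (0, 1, a) => l • single (1, 1, a) 1
  | 1, (1, 0, a) => -single (1, 1, a) 1
  | 1, (1, 1, _) => 0
  | 2, (0, 0, a) => single (0, 0, a + 1) 1
  | 2, (0, 1, a) => -single (0, 1, a + 1) 1 + l • single (1, 0, a + 1) 1 - q • single (1, 1, a) 1
  | 2, (1, 0, a) => -single (1, 0, a + 1) 1
  | 2, (1, 1, a) => single (1, 1, a + 1) 1

theorem mul_monomial {A : Type*} [Ring A] [Algebra ℂ A] {l q : ℂ} {y : Fin 3 → A}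
    (h : ∀ r ∈ S l q, FreeAlgebra.lift ℂ y r = 0) (i : Fin 3) (e : Exponent) :
    y i * monomial y e = Finsupp.linearCombination ℂ (monomial y) (leftMul l q i e) := by
  have r₁ := h (X 1 * X 0 + X 0 * X 1) (by simp [S])
  have r₂ := h (X 2 * X 0 + X 0 * X 2) (by simp [S])
  have r₃ := h (X 2 * X 1 + X 1 * X 2 - l • (X 0 * X 2) + q • (X 0 * X 1)) (by simp [S])
  have r₄ := h (X 0 * X 0) (by simp [S])
  have r₅ := h (X 1 * X 1 - l • (X 0 * X 1)) (by simp [S])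
  simp only [X, map_add, map_sub, map_mul, map_smul, FreeAlgebra.lift_ι_apply] at r₁ r₂ r₃ r₄ r₅
  have h₁₀ (w : A) : y 1 * (y 0 * w) = -(y 0 * (y 1 * w)) := by
    linear_combination (norm := noncomm_ring) r₁ * w
  have h₂₀ (w : A) : y 2 * (y 0 * w) = -(y 0 * (y 2 * w)) := by
    linear_combination (norm := noncomm_ring) r₂ * w
  have h₂₁ (w : A) :
      y 2 * (y 1 * w) = -(y 1 * (y 2 * w)) + l • (y 0 * (y 2 * w)) - q • (y 0 * (y 1 * w)) := by
    linear_combination (norm := noncomm_ring) r₃ * w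
  have h₀₀ (w : A) : y 0 * (y 0 * w) = 0 := by
    linear_combination (norm := noncomm_ring) r₄ * w
  have h₁₁ (w : A) : y 1 * (y 1 * w) = l • (y 0 * (y 1 * w)) := by
    linear_combination (norm := noncomm_ring) r₅ * w
  obtain ⟨e₁, e₂, a⟩ := e
  fin_cases i <;> fin_cases e₁ <;> fin_cases e₂ <;>
    simp [monomial, leftMul, pow_succ', mul_assoc, h₁₀, h₂₀, h₂₁, h₀₀, h₁₁, mul_add, mul_sub]

variable (l q : ℂ)

noncomputable def action : F →ₐ[ℂ] Module.End ℂ (Exponent →₀ ℂ) :=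
  FreeAlgebra.lift ℂ fun i => Finsupp.linearCombination ℂ (leftMul l q i)

theorem action_X_single (i : Fin 3) (e : Exponent) (c : ℂ) :
    action l q (X i) (Finsupp.single e c) = c • leftMul l q i e := by
  simp [action, X]

theorem action_eq_zero_of_mem_S {r : F} (hr : r ∈ S l q) : action l q r = 0 := by
  simp only [S, Set.mem_insert_iff, Set.mem_singleton_iff] at hr
  rcases hr with rfl | rfl | rfl | rfl | rfl <;>
  · refine Finsupp.lhom_ext' fun e => LinearMap.ext_ring ?_
    obtain ⟨e₁, e₂, a⟩ := e
    fin_cases e₁ <;> fin_cases e₂ <;>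
      simp [Module.End.mul_apply, action_X_single, leftMul] <;> module

theorem action_X_two_pow_single (a k : ℕ) :
    (action l q (X 2) ^ a) (Finsupp.single (0, 0, k) 1) = Finsupp.single (0, 0, k + a) 1 := by
  induction a generalizing k with
  | zero => rfl
  | succ a ih => simp [pow_succ, action_X_single, leftMul, ih, add_assoc, add_comm 1]

theorem action_monomial (e : Exponent) :
    action l q (monomial X e) (Finsupp.single (0, 0, 0) 1) = Finsupp.single e 1 := by
  obtain ⟨e₁, e₂, a⟩ := e
  have h := action_X_two_pow_single l q a 0
  rw [zero_add] at h
  fin_cases e₁ <;> fin_cases e₂ <;>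
    simp [monomial, Module.End.mul_apply, h, action_X_single, leftMul]

local notation "mk" => RingQuot.mkAlgHom ℂ (rel l q)

theorem linearIndependent_mk_monomial : LinearIndependent ℂ fun e => mk (monomial X e) := by
  let ρ := RingQuot.liftAlgHom ℂ (s := rel l q) ⟨action l q, fun _ _ h => by
    rw [h.2, map_zero, action_eq_zero_of_mem_S l q h.1]⟩
  refine LinearIndependent.of_comp
    ((LinearMap.applyₗ (Finsupp.single (0, 0, 0) 1)).comp ρ.toLinearMap) ?_
  convert Finsupp.linearIndependent_single_one ℂ Exponent
  simp [ρ, action_monomial]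

theorem span_mk_monomial : Submodule.span ℂ (Set.range fun e => mk (monomial X e)) = ⊤ := by
  have hmk : FreeAlgebra.lift ℂ (mk ∘ X) = mk := FreeAlgebra.lift_comp_ι _
  have hrel : ∀ r ∈ S l q, FreeAlgebra.lift ℂ (mk ∘ X) r = 0 := fun r hr => by
    rw [hmk]
    simpa using RingQuot.mkAlgHom_rel ℂ (show rel l q r 0 from ⟨hr, rfl⟩)
  simp_rw [map_monomial]
  refine Submodule.span_range_eq_top_of_generator_mul_mem _ (RingQuot.mkAlgHom_surjective ℂ _) _
    (Submodule.subset_span ⟨(0, 0, 0), by simp [monomial]⟩) fun i e => ?_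
  rw [← Finsupp.range_linearCombination]
  exact ⟨_, (mul_monomial hrel i e).symm⟩

end R15

/-- the images in `F/I` of the monomials `x₁^{e₁} x₂^{e₂} x₃^{a₃}`, `e₁, e₂ ∈ {0,1}`, `a₃ ∈ ℕ`, form a `ℂ`-basis. -/
theorem basis_R15_t_neg_one (l q : ℂ) :
    LinearIndependent ℂ (fun e : Fin 2 × Fin 2 × ℕ =>
      RingQuot.mkAlgHom ℂ (rel l q) (X 0 ^ (e.1 : ℕ) * X 1 ^ (e.2.1 : ℕ) * X 2 ^ e.2.2)) ∧
    Submodule.span ℂ (Set.range (fun e : Fin 2 × Fin 2 × ℕ =>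
      RingQuot.mkAlgHom ℂ (rel l q) (X 0 ^ (e.1 : ℕ) * X 1 ^ (e.2.1 : ℕ) * X 2 ^ e.2.2))) = ⊤ :=
  ⟨R15.linearIndependent_mk_monomial l q, R15.span_mk_monomial l q⟩
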